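/- arXiv:1709.03768 — 2 statements merged into one kernel-verified Lean document; each statement's English description precedes it below -/
import Mathlib

section
/- Assume bounded instance-dependent noise: 0 ≤ ρ_{+1}(x), 0 ≤ ρ_{-1}(x), and ρ_{+1}(x) + ρ_{-1}(x) < 1 for all x. Fix x and let UB(ρ_{+1}(x)) and UB(ρ_{-1}(x)) be upper bounds on ρ_{+1}(x) and ρ_{-1}(x) respectively, each strictly less than 1. Then: (i) if η̃(x) < (1 - UB(ρ_{+1}(x)))/2, the Bayes optimal classifier under the clean distribution assigns label -1 to x (i.e., η(x) < 1/2); (ii) if η̃(x) > (1 + UB(ρ_{-1}(x)))/2, the Bayes optimal classifier under the clean distribution assigns label +1 to x (i.e., η(x) > 1/2). -/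
/-! If `η ≥ 1/2`, then `η̃ ≥ (1 - ρ₊) η ≥ (1 - ρ₊)/2 ≥ (1 - UB(ρ₊))/2`, which gives the first
criterion. Flipping the labels, `(η, ρ₊, ρ₋) ↦ (1 - η, ρ₋, ρ₊)`, sends `η̃` to `1 - η̃`, and turns
the second criterion into the first. -/

namespace LabelNoise

def noisyPosterior (η ρp ρm : ℝ) : ℝ := (1 - ρp) * η + ρm * (1 - η)

theorem noisyPosterior_eq_one_sub_noisyPosterior_flip (η ρp ρm : ℝ) :
    noisyPosterior η ρp ρm = 1 - noisyPosterior (1 - η) ρm ρp := by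
  unfold noisyPosterior
  ring

theorem one_sub_mul_le_noisyPosterior {η ρp ρm : ℝ} (hρm : 0 ≤ ρm) (hη : η ≤ 1) :
    (1 - ρp) * η ≤ noisyPosterior η ρp ρm :=
  le_add_of_nonneg_right (mul_nonneg hρm (sub_nonneg.mpr hη))

theorem lt_half_of_noisyPosterior_lt {η ρp ρm ub : ℝ} (hρm : 0 ≤ ρm) (hη : η ≤ 1)
    (hρp : ρp ≤ ub) (hub : ub < 1) (h : noisyPosterior η ρp ρm < (1 - ub) / 2) : η < 1 / 2 := by
  by_contra! hη_half
  have hρp_lt : 0 < 1 - ρp := by linarith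
  have : (1 - ub) / 2 ≤ noisyPosterior η ρp ρm :=
    calc (1 - ub) / 2 ≤ (1 - ρp) * (1 / 2) := by linarith
      _ ≤ (1 - ρp) * η := mul_le_mul_of_nonneg_left hη_half hρp_lt.le
      _ ≤ noisyPosterior η ρp ρm := one_sub_mul_le_noisyPosterior hρm hη
  linarith

theorem half_lt_of_lt_noisyPosterior {η ρp ρm ub : ℝ} (hρp : 0 ≤ ρp) (hη : 0 ≤ η)
    (hρm : ρm ≤ ub) (hub : ub < 1) (h : (1 + ub) / 2 < noisyPosterior η ρp ρm) :
    1 / 2 < η := by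
  rw [noisyPosterior_eq_one_sub_noisyPosterior_flip] at h
  have := lt_half_of_noisyPosterior_lt hρp (sub_le_self 1 hη) hρm hub (by linarith)
  linarith

end LabelNoise

theorem distilled_example_criterion_with_upper_bounds_general
    (η ηt ρp ρm ubp ubm : ℝ)
    (hη0 : 0 ≤ η) (hη1 : η ≤ 1)
    (hρp0 : 0 ≤ ρp) (hρm0 : 0 ≤ ρm)
    (hubp : ρp ≤ ubp) (hubp1 : ubp < 1)
    (hubm : ρm ≤ ubm) (hubm1 : ubm < 1)
    (hηt : ηt = (1 - ρp) * η + ρm * (1 - η)) :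
    (ηt < (1 - ubp) / 2 → η < 1/2) ∧
    (ηt > (1 + ubm) / 2 → η > 1/2) := by
  change ηt = LabelNoise.noisyPosterior η ρp ρm at hηt
  subst hηt
  exact ⟨LabelNoise.lt_half_of_noisyPosterior_lt hρm0 hη1 hubp hubp1,
    LabelNoise.half_lt_of_lt_noisyPosterior hρp0 hη0 hubm hubm1⟩

/-- Per-instance distilled-example criterion with upper bounds.
Fix `x` and let `ubp ≥ ρ₊(x)` and `ubm ≥ ρ₋(x)` be upper bounds, each
strictly less than 1.  If `η̃(x) < (1 - ubp)/2` then the Bayes optimal label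
at `x` is `-1` (i.e. `η(x) < 1/2`); if `η̃(x) > (1 + ubm)/2` then the Bayes
optimal label at `x` is `+1` (i.e. `η(x) > 1/2`). -/
theorem distilled_example_criterion_with_upper_bounds
    (η ηt ρp ρm ubp ubm : ℝ)
    (hη0 : 0 ≤ η) (hη1 : η ≤ 1)
    (hρp0 : 0 ≤ ρp) (hρm0 : 0 ≤ ρm)
    (hsum : ρp + ρm < 1)
    (hubp : ρp ≤ ubp) (hubp1 : ubp < 1)
    (hubm : ρm ≤ ubm) (hubm1 : ubm < 1)
    (hηt : ηt = (1 - ρp) * η + ρm * (1 - η)) :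
    (ηt < (1 - ubp) / 2 → η < 1/2) ∧
    (ηt > (1 + ubm) / 2 → η > 1/2) :=
  distilled_example_criterion_with_upper_bounds_general η ηt ρp ρm ubp ubm hη0 hη1 hρp0 hρm0 hubp
    hubp1 hubm hubm1 hηt
end

section
/- Assume 0 ≤ ρ_{+1}(x) ≤ ρ_{+1max} < 1 and 0 ≤ ρ_{-1}(x) ≤ ρ_{-1max} < 1 and ρ_{+1}(x)+ρ_{-1}(x) < 1 for all x. Then for any x: if η̃(x) < (1 - ρ_{+1max})/2 then η(x) < 1/2, and if η̃(x) > (1 + ρ_{-1max})/2 then η(x) > 1/2. -/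
/-!
Writing the noisy posterior as `η̃ = (1 - ρ₊ - ρ₋) η + ρ₋`, it is a strictly increasing affine
function of `η` because `ρ₊ + ρ₋ < 1`. Hence `η < 1/2` exactly when `η̃` lies below its value
`(1 - ρ₊ + ρ₋)/2` at `η = 1/2`, and this threshold lies between `(1 - ρ₊max)/2` and `(1 + ρ₋max)/2`.
-/

def noisyPosterior (ρp ρm η : ℝ) : ℝ := (1 - ρp) * η + ρm * (1 - η)

section NoisyPosterior

variable {ρp ρm : ℝ}

theorem noisyPosterior_eq_affine (η : ℝ) :
    noisyPosterior ρp ρm η = (1 - ρp - ρm) * η + ρm := by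
  unfold noisyPosterior; ring

theorem noisyPosterior_half : noisyPosterior ρp ρm (1 / 2) = (1 - ρp + ρm) / 2 := by
  unfold noisyPosterior; ring

theorem noisyPosterior_strictMono (h : ρp + ρm < 1) : StrictMono (noisyPosterior ρp ρm) := by
  have hmono : StrictMono fun η => (1 - ρp - ρm) * η + ρm :=
    (strictMono_mul_left_of_pos (by linarith)).add_const ρm
  simpa only [← noisyPosterior_eq_affine] using hmono

end NoisyPosterior

theorem distilled_example_criterion_uniform_bounds_general
    {X : Type*} (η ηt ρp ρm : X → ℝ) (ρpmax ρmmax : ℝ)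
    (hρp : ∀ x, 0 ≤ ρp x ∧ ρp x ≤ ρpmax)
    (hρm : ∀ x, 0 ≤ ρm x ∧ ρm x ≤ ρmmax)
    (hsum : ∀ x, ρp x + ρm x < 1)
    (hηt : ∀ x, ηt x = (1 - ρp x) * η x + ρm x * (1 - η x)) :
    ∀ x, (ηt x < (1 - ρpmax) / 2 → η x < 1/2) ∧
         (ηt x > (1 + ρmmax) / 2 → η x > 1/2) := by
  intro x
  obtain ⟨hρp_nonneg, hρp_le⟩ := hρp x
  obtain ⟨hρm_nonneg, hρm_le⟩ := hρm x
  have hmono := noisyPosterior_strictMono (hsum x)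
  have hηt_eq : ηt x = noisyPosterior (ρp x) (ρm x) (η x) := hηt x
  have hthreshold := noisyPosterior_half (ρp := ρp x) (ρm := ρm x)
  constructor
  · intro hlow
    exact hmono.lt_iff_lt.mp (by linarith)
  · intro hhigh
    exact hmono.lt_iff_lt.mp (by linarith)

/-- Distilled-example criterion with uniform noise-rate bounds
(Corollary).  Under BILN with `ρ₊(x) ≤ ρ₊max < 1`, `ρ₋(x) ≤ ρ₋max < 1` and
`ρ₊(x) + ρ₋(x) < 1` for all `x`: if `η̃(x) < (1 - ρ₊max)/2` then
`η(x) < 1/2`, and if `η̃(x) > (1 + ρ₋max)/2` then `η(x) > 1/2`. -/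
theorem distilled_example_criterion_uniform_bounds
    {X : Type*} (η ηt ρp ρm : X → ℝ) (ρpmax ρmmax : ℝ)
    (hη : ∀ x, 0 ≤ η x ∧ η x ≤ 1)
    (hρp : ∀ x, 0 ≤ ρp x ∧ ρp x ≤ ρpmax) (hρpmax : ρpmax < 1)
    (hρm : ∀ x, 0 ≤ ρm x ∧ ρm x ≤ ρmmax) (hρmmax : ρmmax < 1)
    (hsum : ∀ x, ρp x + ρm x < 1)
    (hηt : ∀ x, ηt x = (1 - ρp x) * η x + ρm x * (1 - η x)) :
    ∀ x, (ηt x < (1 - ρpmax) / 2 → η x < 1/2) ∧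
         (ηt x > (1 + ρmmax) / 2 → η x > 1/2) :=
  distilled_example_criterion_uniform_bounds_general η ηt ρp ρm ρpmax ρmmax hρp hρm hsum hηt
end
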